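/- arXiv:2103.10875 — 10 statements merged into one kernel-verified Lean document; each statement's English description precedes it below -/
import Mathlib

section
/- Let N, I1, I2, tau, tau1, tau2 be positive real numbers and let rho_aux be a real number with 0 ≤ rho_aux < 1. Define rho_k = N·tau/(N·tau + I_k·tau_k) for k = 1,2, the average number of observations per level n̄ = 2N/(I1 + I2), and T_aux = (1 − rho_aux)⁻¹. If n̄ ≥ 1, then (1 − rho_1·rho_2·rho_aux)⁻¹ ≤ (1 + tau/min(tau1, tau2)) · min(n̄, T_aux). -/
/-!
Since `ρ₁ρ₂ρ_aux` is at most both `ρ_aux` and `ρ₁ρ₂`, the relaxation time is at most both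
`T_aux` and `(1 - ρ₁ρ₂)⁻¹`. Writing `a = Nτ`, `x = I₁τ₁`, `y = I₂τ₂`, the latter equals
`(a + x)(a + y) / (a(x + y) + xy) ≤ 1 + 2a/(x + y)`, and `x + y ≥ (I₁ + I₂) min(τ₁, τ₂)` together
with `n̄ ≥ 1` bounds this by `n̄ (1 + τ / min(τ₁, τ₂))`.
-/

lemma inv_one_sub_le_inv_one_sub {t u : ℝ} (htu : t ≤ u) (hu : u < 1) :
    (1 - t)⁻¹ ≤ (1 - u)⁻¹ :=
  inv_anti₀ (sub_pos.2 hu) (by linarith)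

lemma one_sub_div_add_mul_div_add {a x y : ℝ} (hx : 0 < a + x) (hy : 0 < a + y) :
    1 - a / (a + x) * (a / (a + y)) = (a * (x + y) + x * y) / ((a + x) * (a + y)) := by
  field_simp
  ring

lemma inv_one_sub_div_add_mul_div_add_le {a x y : ℝ} (ha : 0 ≤ a) (hx : 0 < x) (hy : 0 < y) :
    (1 - a / (a + x) * (a / (a + y)))⁻¹ ≤ 1 + 2 * a / (x + y) := by
  have hax : 0 < a + x := by positivity
  have hay : 0 < a + y := by positivity
  rw [one_sub_div_add_mul_div_add hax hay, inv_div,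
    one_add_div (add_pos hx hy).ne', div_le_div_iff₀ (by positivity) (by positivity)]
  -- the two sides differ by `a²(x + y) + 2axy`
  nlinarith [mul_nonneg (mul_nonneg ha ha) (add_pos hx hy).le, mul_nonneg ha (mul_pos hx hy).le]

lemma one_add_two_mul_div_sum_le {N I1 I2 tau tau1 tau2 : ℝ}
    (hN : 0 < N) (hI1 : 0 < I1) (hI2 : 0 < I2)
    (htau : 0 < tau) (htau1 : 0 < tau1) (htau2 : 0 < tau2)
    (hnbar : 1 ≤ 2 * N / (I1 + I2)) :
    1 + 2 * (N * tau) / (I1 * tau1 + I2 * tau2)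
      ≤ (1 + tau / min tau1 tau2) * (2 * N / (I1 + I2)) := by
  set m := min tau1 tau2
  have hm : 0 < m := lt_min htau1 htau2
  have hden : (I1 + I2) * m ≤ I1 * tau1 + I2 * tau2 := by
    rw [add_mul]
    gcongr
    exacts [min_le_left _ _, min_le_right _ _]
  calc 1 + 2 * (N * tau) / (I1 * tau1 + I2 * tau2)
      ≤ 1 + 2 * (N * tau) / ((I1 + I2) * m) := by gcongr
    _ = 1 + 2 * N / (I1 + I2) * (tau / m) := by field_simp
    _ ≤ (1 + tau / m) * (2 * N / (I1 + I2)) := by nlinarith [div_pos htau hm]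

/-- Upper bound in Theorem 1: the relaxation time of the collapsed Gibbs sampler,
`(1 - ρ₁ρ₂ρ_aux)⁻¹` with `ρ_k = Nτ/(Nτ + I_k τ_k)`, is at most
`(1 + τ/min(τ₁,τ₂)) · min(n̄, T_aux)` where `n̄ = 2N/(I₁+I₂)` and `T_aux = (1-ρ_aux)⁻¹`. -/
theorem stmt_0 (N I1 I2 tau tau1 tau2 rho_aux : ℝ)
    (hN : 0 < N) (hI1 : 0 < I1) (hI2 : 0 < I2)
    (htau : 0 < tau) (htau1 : 0 < tau1) (htau2 : 0 < tau2)
    (haux0 : 0 ≤ rho_aux) (haux1 : rho_aux < 1)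
    (hnbar : 1 ≤ 2 * N / (I1 + I2)) :
    (1 - N * tau / (N * tau + I1 * tau1) * (N * tau / (N * tau + I2 * tau2)) * rho_aux)⁻¹
      ≤ (1 + tau / min tau1 tau2) * min (2 * N / (I1 + I2)) (1 - rho_aux)⁻¹ := by
  set r := N * tau / (N * tau + I1 * tau1) * (N * tau / (N * tau + I2 * tau2))
  have hr0 : 0 ≤ r := by positivity
  have hr1 : r < 1 :=
    mul_lt_one_of_nonneg_of_lt_one_left (by positivity)
      ((div_lt_one (by positivity)).2 (by nlinarith))
      ((div_le_one (by positivity)).2 (by nlinarith))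
  have hC : 1 ≤ 1 + tau / min tau1 tau2 := by
    have := div_pos htau (lt_min htau1 htau2); linarith
  rw [mul_min_of_nonneg _ _ (by linarith)]
  refine le_min ?_ ?_
  · calc (1 - r * rho_aux)⁻¹ ≤ (1 - r)⁻¹ :=
          inv_one_sub_le_inv_one_sub (mul_le_of_le_one_right hr0 haux1.le) hr1
      _ ≤ 1 + 2 * (N * tau) / (I1 * tau1 + I2 * tau2) :=
          inv_one_sub_div_add_mul_div_add_le (by positivity) (by positivity) (by positivity)
      _ ≤ _ := one_add_two_mul_div_sum_le hN hI1 hI2 htau htau1 htau2 hnbar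
  · calc (1 - r * rho_aux)⁻¹ ≤ (1 - rho_aux)⁻¹ :=
          inv_one_sub_le_inv_one_sub (mul_le_of_le_one_left haux0 hr1.le) haux1
      _ ≤ _ := le_mul_of_one_le_left (inv_pos.2 (sub_pos.2 haux1)).le hC
end

section
/- Let N, I1, I2, tau, tau1, tau2 be positive real numbers and let rho_aux be a real number with 0 ≤ rho_aux < 1. Define rho_k = N·tau/(N·tau + I_k·tau_k) for k = 1,2, n̄ = 2N/(I1 + I2), and T_aux = (1 − rho_aux)⁻¹. Then (1 − rho_1·rho_2·rho_aux)⁻¹ ≥ (1/3) · min(1, tau/(2·max(tau1, tau2))) · min(n̄, T_aux). -/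
/-!
Write `aₖ = 1 - ρₖ = Iₖτₖ/(Nτ + Iₖτₖ)` and `c = 1 - ρ_aux`. A union bound gives
`1 - ρ₁ρ₂ρ_aux ≤ a₁ + a₂ + c`, so it suffices that the scale
`m = min(1, τ/(2 max(τ₁,τ₂))) · min(n̄, T_aux)` satisfies `m·a₁, m·a₂, m·c ≤ 1`.
The last is `m ≤ T_aux`; for the others, `m ≤ Nτ/((I₁+I₂) max(τ₁,τ₂))` while
`aₖ ≤ Iₖτₖ/(Nτ)`, and `Iₖτₖ ≤ (I₁+I₂) max(τ₁,τ₂)`.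
-/

theorem one_sub_mul_mul_le_add_add {x y z : ℝ} (hx0 : 0 ≤ x) (hx1 : x ≤ 1) (hy : y ≤ 1)
    (hz : z ≤ 1) : 1 - x * y * z ≤ (1 - x) + (1 - y) + (1 - z) := by
  have hxy : x * y ≤ 1 := by nlinarith
  -- the difference of the two sides is `(1 - x)(1 - y) + (1 - xy)(1 - z)`
  nlinarith [mul_nonneg (sub_nonneg.2 hx1) (sub_nonneg.2 hy),
    mul_nonneg (sub_nonneg.2 hxy) (sub_nonneg.2 hz)]

theorem one_sub_mul_mul_pos {x y z : ℝ} (hx0 : 0 ≤ x) (hx1 : x ≤ 1) (hy0 : 0 ≤ y)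
    (hy1 : y ≤ 1) (hz : z < 1) : 0 < 1 - x * y * z := by
  have hxy0 : 0 ≤ x * y := mul_nonneg hx0 hy0
  have hxy1 : x * y ≤ 1 := mul_le_one₀ hx1 hy0 hy1
  rcases le_total z 0 with hz0 | hz0
  · nlinarith [mul_nonpos_of_nonneg_of_nonpos hxy0 hz0]
  · nlinarith [mul_le_of_le_one_left hz0 hxy1]

theorem one_sub_div_add_le_div {p q : ℝ} (hp : 0 < p) (hq : 0 ≤ q) :
    1 - p / (p + q) ≤ q / p := by
  rw [one_sub_div (by positivity), add_sub_cancel_left]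
  exact div_le_div_of_nonneg_left hq hp (le_add_of_nonneg_right hq)

theorem mul_one_sub_div_add_le_one {m p q D : ℝ} (hp : 0 < p) (hq : 0 ≤ q) (hqD : q ≤ D)
    (hm : m ≤ p / D) : m * (1 - p / (p + q)) ≤ 1 := by
  have hD : 0 ≤ D := hq.trans hqD
  have hr : p / (p + q) ≤ 1 := div_le_one_of_le₀ (le_add_of_nonneg_right hq) (by positivity)
  calc m * (1 - p / (p + q)) ≤ p / D * (q / p) :=
        mul_le_mul hm (one_sub_div_add_le_div hp hq) (sub_nonneg.2 hr) (by positivity)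
    _ = q / D := by field_simp
    _ ≤ 1 := div_le_one_of_le₀ hqD hD

theorem min_mul_min_le_div {N I tau M T : ℝ} (hN : 0 ≤ N) (hI : 0 ≤ I) (htau : 0 ≤ tau)
    (hM : 0 ≤ M) (hT : 0 ≤ T) :
    min 1 (tau / (2 * M)) * min (2 * N / I) T ≤ N * tau / (I * M) :=
  calc min 1 (tau / (2 * M)) * min (2 * N / I) T ≤ tau / (2 * M) * (2 * N / I) :=
        mul_le_mul (min_le_right _ _) (min_le_left _ _) (le_min (by positivity) hT)
          (by positivity)
    _ = N * tau / (I * M) := by ring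

theorem div_three_le_inv_add_add {m a b c : ℝ} (hs : 0 < a + b + c) (ha : m * a ≤ 1)
    (hb : m * b ≤ 1) (hc : m * c ≤ 1) : m / 3 ≤ (a + b + c)⁻¹ := by
  rw [← one_div, le_div_iff₀ hs]
  linarith

theorem stmt_1_general (N I1 I2 tau tau1 tau2 rho_aux : ℝ)
    (hN : 0 < N) (hI1 : 0 < I1) (hI2 : 0 < I2)
    (htau : 0 < tau) (htau1 : 0 < tau1) (htau2 : 0 < tau2)
    (haux1 : rho_aux < 1) :
    (1 / 3) * min 1 (tau / (2 * max tau1 tau2)) * min (2 * N / (I1 + I2)) (1 - rho_aux)⁻¹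
      ≤ (1 - N * tau / (N * tau + I1 * tau1) * (N * tau / (N * tau + I2 * tau2)) * rho_aux)⁻¹ := by
  set M := max tau1 tau2
  set m := min 1 (tau / (2 * M)) * min (2 * N / (I1 + I2)) (1 - rho_aux)⁻¹
  have hc : 0 < 1 - rho_aux := sub_pos.2 haux1
  have hm : m ≤ N * tau / ((I1 + I2) * M) := min_mul_min_le_div hN.le (by positivity)
    htau.le (by positivity) (by positivity)
  have hD1 : I1 * tau1 ≤ (I1 + I2) * M := mul_le_mul (by linarith) (le_max_left _ _) htau1.le
    (by positivity)
  have hD2 : I2 * tau2 ≤ (I1 + I2) * M := mul_le_mul (by linarith) (le_max_right _ _) htau2.le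
    (by positivity)
  have h1 := mul_one_sub_div_add_le_one (by positivity) (by positivity) hD1 hm
  have h2 := mul_one_sub_div_add_le_one (by positivity) (by positivity) hD2 hm
  have hmT : m ≤ (1 - rho_aux)⁻¹ :=
    (mul_le_of_le_one_left (by positivity) (min_le_left _ _)).trans (min_le_right _ _)
  have h3 : m * (1 - rho_aux) ≤ 1 := (le_div_iff₀ hc).1 (by rwa [one_div])
  have hr1 : N * tau / (N * tau + I1 * tau1) ≤ 1 :=
    div_le_one_of_le₀ (le_add_of_nonneg_right (by positivity)) (by positivity)
  have hr2 : N * tau / (N * tau + I2 * tau2) ≤ 1 :=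
    div_le_one_of_le₀ (le_add_of_nonneg_right (by positivity)) (by positivity)
  calc 1 / 3 * min 1 (tau / (2 * M)) * min (2 * N / (I1 + I2)) (1 - rho_aux)⁻¹ = m / 3 := by ring
    _ ≤ _ := div_three_le_inv_add_add (by linarith) h1 h2 h3
    _ ≤ _ := inv_anti₀ (one_sub_mul_mul_pos (by positivity) hr1 (by positivity) hr2 haux1)
        (one_sub_mul_mul_le_add_add (by positivity) hr1 hr2 haux1.le)

/-- Lower bound in Theorem 1: the relaxation time of the collapsed Gibbs sampler,
`(1 - ρ₁ρ₂ρ_aux)⁻¹` with `ρ_k = Nτ/(Nτ + I_k τ_k)`, is at least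
`(1/3) · min(1, τ/(2 max(τ₁,τ₂))) · min(n̄, T_aux)` where `n̄ = 2N/(I₁+I₂)` and
`T_aux = (1-ρ_aux)⁻¹`. -/
theorem stmt_1 (N I1 I2 tau tau1 tau2 rho_aux : ℝ)
    (hN : 0 < N) (hI1 : 0 < I1) (hI2 : 0 < I2)
    (htau : 0 < tau) (htau1 : 0 < tau1) (htau2 : 0 < tau2)
    (haux0 : 0 ≤ rho_aux) (haux1 : rho_aux < 1) :
    (1 / 3) * min 1 (tau / (2 * max tau1 tau2)) * min (2 * N / (I1 + I2)) (1 - rho_aux)⁻¹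
      ≤ (1 - N * tau / (N * tau + I1 * tau1) * (N * tau / (N * tau + I2 * tau2)) * rho_aux)⁻¹ :=
  stmt_1_general N I1 I2 tau tau1 tau2 rho_aux hN hI1 hI2 htau htau1 htau2 haux1
end

section
/- Let G be a simple graph on the vertex set {1,…,M} with its natural linear order. If ℓ < m < j, m is a fill-in neighbor of ℓ, and j is a fill-in neighbor of ℓ, then j is a fill-in neighbor of m. -/
/-!
Gluing the reversed walk `ℓ → m` to the walk `ℓ → j` gives a walk `m → j` whose internal
vertices are `ℓ` or lie below `ℓ`, hence lie below `m`.
-/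

/-- `j` is a fill-in neighbor of `m` in the graph `G` (on vertices `{1,…,M} ⊆ ℕ` with their
natural order): `j = m`, or there is a walk in `G` from `m` to `j` all of whose internal
vertices are strictly smaller than `m`. -/
def FillIn (G : SimpleGraph ℕ) (m j : ℕ) : Prop :=
  j = m ∨ ∃ w : G.Walk m j, ∀ v ∈ w.support, v = m ∨ v = j ∨ v < m

open SimpleGraph

theorem FillIn.exists_walk {G : SimpleGraph ℕ} {m j : ℕ} (h : FillIn G m j) :
    ∃ w : G.Walk m j, ∀ v ∈ w.support, v = m ∨ v = j ∨ v < m := by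
  rcases h with rfl | hw
  · exact ⟨Walk.nil, fun v hv => Or.inl (by simpa using hv)⟩
  · exact hw

theorem stmt_9_general (G : SimpleGraph ℕ) (l m j : ℕ) (hlm : l < m)
    (h1 : FillIn G l m) (h2 : FillIn G l j) : FillIn G m j := by
  obtain ⟨w1, hw1⟩ := h1.exists_walk
  obtain ⟨w2, hw2⟩ := h2.exists_walk
  refine Or.inr ⟨w1.reverse.append w2, fun v hv => ?_⟩
  rw [Walk.mem_support_append_iff, Walk.support_reverse, List.mem_reverse] at hv
  rcases hv with hv | hv
  · rcases hw1 v hv with h | h | h <;> omega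
  · rcases hw2 v hv with h | h | h <;> omega

/-- Closure property of the fill-in pattern (key structural fact in the proof of the upper
bound of Theorem 2): if `ℓ < m < j`, `m` is a fill-in neighbor of `ℓ` and `j` is a fill-in
neighbor of `ℓ`, then `j` is a fill-in neighbor of `m`. -/
theorem stmt_9 (G : SimpleGraph ℕ) (l m j : ℕ) (hlm : l < m) (hmj : m < j)
    (h1 : FillIn G l m) (h2 : FillIn G l j) : FillIn G m j :=
  stmt_9_general G l m j hlm h1 h2
end

section
/- Let G be a finite simple graph on the linearly ordered vertex set {1,…,M} satisfying the closure property: whenever ℓ < m < j and G has edges {ℓ,m} and {ℓ,j}, then G also has the edge {m,j}. Let e denote the number of edges of G and let T denote the number of triples (ℓ,m,j) with ℓ < m < j such that {ℓ,m} and {ℓ,j} are edges of G. Then T² ≤ e³ (equivalently, T ≤ e^{3/2}). -/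
/-!
Counting the triples by their smallest vertex `ℓ` gives `T = ∑ ℓ, C(d ℓ, 2)`, where `d ℓ` is the
number of neighbours of `ℓ` above `ℓ`, while `∑ ℓ, d ℓ = e`. By the closure property the upper
neighbourhood of `ℓ` is a clique, so `C(d ℓ, 2) ≤ e`; hence `d ℓ - 1 ≤ √(2e)` and
`2T = ∑ ℓ, d ℓ (d ℓ - 1) ≤ e √(2e)`.
-/

open Finset

lemma Nat.two_mul_choose_two_le_mul_sqrt {d e : ℕ} (h : d.choose 2 ≤ e) :
    2 * d.choose 2 ≤ d * Nat.sqrt (2 * e) := by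
  have htwo : 2 * d.choose 2 = d * (d - 1) := by
    rw [Nat.choose_two_right, Nat.mul_div_cancel' (Nat.even_mul_pred_self d).two_dvd]
  have hpred : d - 1 ≤ Nat.sqrt (2 * e) := by
    rw [Nat.le_sqrt]
    calc (d - 1) * (d - 1) ≤ d * (d - 1) := Nat.mul_le_mul_right _ (Nat.sub_le _ _)
      _ ≤ 2 * e := by omega
  rw [htwo]
  exact Nat.mul_le_mul_left _ hpred

theorem Finset.sum_choose_two_sq_le_sum_cube {ι : Type*} (s : Finset ι) (f : ι → ℕ)
    (h : ∀ i ∈ s, (f i).choose 2 ≤ ∑ i ∈ s, f i) :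
    (∑ i ∈ s, (f i).choose 2) ^ 2 ≤ (∑ i ∈ s, f i) ^ 3 := by
  set e := ∑ i ∈ s, f i
  set r := Nat.sqrt (2 * e)
  have hsum : 2 * ∑ i ∈ s, (f i).choose 2 ≤ e * r := by
    rw [mul_sum, sum_mul]
    exact sum_le_sum fun i hi => Nat.two_mul_choose_two_le_mul_sqrt (h i hi)
  have hr : r * r ≤ 2 * e := Nat.sqrt_le _
  nlinarith [Nat.mul_le_mul hsum hsum, Nat.mul_le_mul_left (e * e) hr]

namespace SimpleGraph

lemma IsClique.choose_two_le_card_edgeFinset {V : Type*} [Fintype V] [DecidableEq V]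
    {G : SimpleGraph V} [DecidableRel G.Adj] {s : Finset V} (hs : G.IsClique (s : Set V)) :
    (#s).choose 2 ≤ #G.edgeFinset := by
  rw [← Sym2.card_image_offDiag]
  refine card_le_card fun z hz => ?_
  obtain ⟨⟨a, b⟩, hab, rfl⟩ := mem_image.mp hz
  simp only [mem_offDiag] at hab
  simpa using hs hab.1 hab.2.1 hab.2.2

variable {V : Type*} [LinearOrder V] [Fintype V] (G : SimpleGraph V) [DecidableRel G.Adj]

def upNeighborFinset (v : V) : Finset V := {w | v < w ∧ G.Adj v w}

def upperWedgeFinset : Finset (V × V × V) :=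
  {t | t.1 < t.2.1 ∧ t.2.1 < t.2.2 ∧ G.Adj t.1 t.2.1 ∧ G.Adj t.1 t.2.2}

@[simp]
lemma mem_upNeighborFinset {v w : V} : w ∈ G.upNeighborFinset v ↔ v < w ∧ G.Adj v w := by
  simp [upNeighborFinset]

lemma card_edgeFinset_eq_card_filter_lt_adj :
    #G.edgeFinset = #{p : V × V | p.1 < p.2 ∧ G.Adj p.1 p.2} := by
  symm
  refine card_nbij' (fun p => s(p.1, p.2)) (fun z => (z.inf, z.sup)) ?_ ?_ ?_ ?_
  · rintro ⟨a, b⟩ h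
    simp_all
  · intro z hz
    induction z using Sym2.ind with
    | _ a b =>
      have hab : G.Adj a b := by simpa using hz
      rcases (G.ne_of_adj hab).lt_or_gt with h | h
      · simp [h.le, h, hab]
      · simp [h.le, h, hab.symm]
  · rintro ⟨a, b⟩ h
    simp_all [le_of_lt]
  · intro z _
    exact Sym2.sortEquiv.symm_apply_apply z

lemma sum_card_upNeighborFinset : ∑ v, #(G.upNeighborFinset v) = #G.edgeFinset := by
  simp only [card_edgeFinset_eq_card_filter_lt_adj, upNeighborFinset, card_filter,
    Fintype.sum_prod_type]

lemma card_upperWedgeFinset :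
    #G.upperWedgeFinset = ∑ v, (#(G.upNeighborFinset v)).choose 2 := by
  simp only [upperWedgeFinset, ← card_product_filter_lt]
  rw [card_eq_sum_card_fiberwise (f := Prod.fst) (t := univ) fun _ _ => mem_univ _]
  refine sum_congr rfl fun v _ => ?_
  refine card_nbij' Prod.snd (fun p => (v, p)) ?_ ?_ ?_ ?_
  · rintro ⟨l, m, j⟩ h
    simp only [coe_filter, mem_filter, mem_univ, true_and] at h
    obtain ⟨⟨hlm, hmj, hl_m, hl_j⟩, rfl⟩ := h
    simp [hlm, hmj, hl_m, hl_j, hlm.trans hmj]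
  · rintro ⟨m, j⟩ h
    simp only [coe_filter, mem_product, mem_upNeighborFinset, Set.mem_ofPred] at h
    obtain ⟨⟨⟨hvm, hvm'⟩, -, hvj'⟩, hmj⟩ := h
    simpa using ⟨hvm, hmj, hvm', hvj'⟩
  · rintro ⟨l, m, j⟩ h
    simp_all
  · intro p _
    rfl

lemma isClique_upNeighborFinset
    (hclosure : ∀ l m j : V, l < m → m < j → G.Adj l m → G.Adj l j → G.Adj m j) (v : V) :
    G.IsClique (G.upNeighborFinset v : Set V) := by
  intro m hm j hj hmj
  simp only [mem_coe, mem_upNeighborFinset] at hm hj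
  rcases hmj.lt_or_gt with h | h
  · exact hclosure v m j hm.1 h hm.2 hj.2
  · exact (hclosure v j m hj.1 h hj.2 hm.2).symm

theorem card_upperWedgeFinset_sq_le
    (hclosure : ∀ l m j : V, l < m → m < j → G.Adj l m → G.Adj l j → G.Adj m j) :
    #G.upperWedgeFinset ^ 2 ≤ #G.edgeFinset ^ 3 := by
  rw [card_upperWedgeFinset, ← sum_card_upNeighborFinset]
  refine sum_choose_two_sq_le_sum_cube _ _ fun v _ => ?_
  rw [sum_card_upNeighborFinset]
  exact (G.isClique_upNeighborFinset hclosure v).choose_two_le_card_edgeFinset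

end SimpleGraph

/-- Combinatorial content of the upper bound of Theorem 2: if `G` is a simple graph on the
linearly ordered vertex set `{1,…,M}` (modelled as `Fin M`) satisfying the closure property
(whenever `ℓ < m < j` and `{ℓ,m}`, `{ℓ,j}` are edges, so is `{m,j}`), then the number `T` of
triples `(ℓ,m,j)` with `ℓ < m < j` such that `{ℓ,m}` and `{ℓ,j}` are edges satisfies
`T² ≤ e³`, where `e` is the number of edges of `G`. -/
theorem stmt_10 (M : ℕ) (G : SimpleGraph (Fin M))
    (hclosure : ∀ l m j : Fin M, l < m → m < j → G.Adj l m → G.Adj l j → G.Adj m j) :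
    (Nat.card {t : Fin M × Fin M × Fin M //
        t.1 < t.2.1 ∧ t.2.1 < t.2.2 ∧ G.Adj t.1 t.2.1 ∧ G.Adj t.1 t.2.2}) ^ 2
      ≤ (Nat.card G.edgeSet) ^ 3 := by
  classical
  have htriples : Nat.card {t : Fin M × Fin M × Fin M //
      t.1 < t.2.1 ∧ t.2.1 < t.2.2 ∧ G.Adj t.1 t.2.1 ∧ G.Adj t.1 t.2.2} =
      #G.upperWedgeFinset := by
    rw [Nat.card_eq_fintype_card, Fintype.card_subtype, SimpleGraph.upperWedgeFinset]
  rw [htriples, Nat.card_eq_fintype_card, ← SimpleGraph.edgeFinset_card]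
  exact G.card_upperWedgeFinset_sq_le hclosure
end

section
/- For any finite simple graph with e edges, the number of triangles (3-cliques) is at most e^{3/2}; equivalently, the square of the number of triangles is at most e³. -/
/-!
Fix any linear order on the vertices. Every triangle is `{a, b, c}` for an increasing triple
`a < b < c` of pairwise adjacent vertices, and each of the three coordinate projections of such
triples is an increasing edge `a < b`, of which there are at most `e`. The discrete
Loomis–Whitney inequality `|A|² ≤ |π₁₂ A| |π₁₃ A| |π₂₃ A|` for `A ⊆ α × β × γ` thus gives
`T² ≤ e³`.
-/

open Finset

namespace Finset

theorem card_sq_le_card_image_mul_card_image_mul_card_image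
    {α β γ : Type*} [DecidableEq α] [DecidableEq β] [DecidableEq γ] (A : Finset (α × β × γ)) :
    #A ^ 2 ≤ #(A.image fun p => (p.1, p.2.1)) * #(A.image fun p => (p.1, p.2.2)) *
      #(A.image fun p => (p.2.1, p.2.2)) := by
  set P₁₂ := A.image fun p => (p.1, p.2.1)
  set P₁₃ := A.image fun p => (p.1, p.2.2)
  set P₂₃ := A.image fun p => (p.2.1, p.2.2)
  -- The fibre of `A` over `(a, b)` injects into the fibres of `P₁₃` over `a` and of `P₂₃` over `b`.
  have fiber_sq_le (q : α × β) : #{p ∈ A | (p.1, p.2.1) = q} ^ 2 ≤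
      #{r ∈ P₁₃ | r.1 = q.1} * #{r ∈ P₂₃ | r.1 = q.2} := by
    rw [sq]
    refine Nat.mul_le_mul (card_le_card_of_injOn (fun p => (p.1, p.2.2)) ?_ ?_)
      (card_le_card_of_injOn (fun p => (p.2.1, p.2.2)) ?_ ?_)
    · intro p hp
      simp only [mem_coe, mem_filter, Prod.ext_iff] at hp ⊢
      exact ⟨mem_image_of_mem _ hp.1, hp.2.1⟩
    · intro p hp p' hp' h
      simp only [mem_coe, mem_filter, Prod.ext_iff] at hp hp' h
      exact Prod.ext h.1 (Prod.ext (hp.2.2.trans hp'.2.2.symm) h.2)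
    · intro p hp
      simp only [mem_coe, mem_filter, Prod.ext_iff] at hp ⊢
      exact ⟨mem_image_of_mem _ hp.1, hp.2.2⟩
    · intro p hp p' hp' h
      simp only [mem_coe, mem_filter, Prod.ext_iff] at hp hp' h
      exact Prod.ext (hp.2.1.trans hp'.2.1.symm) (Prod.ext h.1 h.2)
  have sum_le : ∑ q ∈ P₁₂, #{r ∈ P₁₃ | r.1 = q.1} * #{r ∈ P₂₃ | r.1 = q.2} ≤ #P₁₃ * #P₂₃ :=
    calc _ ≤ ∑ q ∈ P₁₂.image Prod.fst ×ˢ P₁₂.image Prod.snd,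
            #{r ∈ P₁₃ | r.1 = q.1} * #{r ∈ P₂₃ | r.1 = q.2} :=
          sum_le_sum_of_subset fun q hq =>
            mem_product.2 ⟨mem_image_of_mem _ hq, mem_image_of_mem _ hq⟩
      _ = (∑ a ∈ P₁₂.image Prod.fst, #{r ∈ P₁₃ | r.1 = a}) *
            ∑ b ∈ P₁₂.image Prod.snd, #{r ∈ P₂₃ | r.1 = b} := by
          rw [sum_product, sum_mul_sum]
      _ ≤ #P₁₃ * #P₂₃ := by
          rw [sum_card_fiberwise_eq_card_filter, sum_card_fiberwise_eq_card_filter]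
          exact Nat.mul_le_mul (card_filter_le _ _) (card_filter_le _ _)
  calc #A ^ 2 = (∑ q ∈ P₁₂, #{p ∈ A | (p.1, p.2.1) = q}) ^ 2 := by rw [← card_eq_sum_card_image]
    _ ≤ #P₁₂ * ∑ q ∈ P₁₂, #{p ∈ A | (p.1, p.2.1) = q} ^ 2 := sq_sum_le_card_mul_sum_sq
    _ ≤ #P₁₂ * (#P₁₃ * #P₂₃) :=
      Nat.mul_le_mul_left _ ((sum_le_sum fun q _ => fiber_sq_le q).trans sum_le)
    _ = #P₁₂ * #P₁₃ * #P₂₃ := (mul_assoc _ _ _).symm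

end Finset

namespace SimpleGraph

section LinearOrder

variable {V : Type*} [Fintype V] [LinearOrder V] (G : SimpleGraph V) [DecidableRel G.Adj]

theorem card_filter_lt_adj_le_card_edgeFinset :
    #{q : V × V | q.1 < q.2 ∧ G.Adj q.1 q.2} ≤ #G.edgeFinset := by
  refine card_le_card_of_injOn (fun q => s(q.1, q.2)) (fun q hq => ?_) ?_
  · simp only [mem_coe, mem_filter, mem_univ, true_and] at hq
    simpa using hq.2
  · rintro ⟨a, b⟩ hab ⟨c, d⟩ hcd h
    simp only [mem_coe, mem_filter, mem_univ, true_and] at hab hcd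
    rcases Sym2.eq_iff.1 h with ⟨rfl, rfl⟩ | ⟨rfl, rfl⟩
    · rfl
    · exact absurd hcd.1 hab.1.asymm

theorem card_cliqueFinset_three_le_card_filter :
    #(G.cliqueFinset 3) ≤ #{p : V × V × V | p.1 < p.2.1 ∧ p.2.1 < p.2.2 ∧
      G.Adj p.1 p.2.1 ∧ G.Adj p.1 p.2.2 ∧ G.Adj p.2.1 p.2.2} := by
  refine card_le_card_of_surjOn (fun p => {p.1, p.2.1, p.2.2}) fun s hs => ?_
  rw [coe_cliqueFinset, mem_cliqueSet_iff] at hs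
  set f := s.orderEmbOfFin hs.card_eq
  have hs_eq : s = {f 0, f 1, f 2} := by
    conv_lhs => rw [← s.image_orderEmbOfFin_univ hs.card_eq]
    simp [f, Fin.univ_succ]
  rw [hs_eq, is3Clique_triple_iff] at hs
  exact ⟨(f 0, f 1, f 2), by simpa using hs, hs_eq.symm⟩

end LinearOrder

theorem card_cliqueFinset_three_sq_le {V : Type*} [Fintype V] [DecidableEq V]
    (G : SimpleGraph V) [DecidableRel G.Adj] :
    #(G.cliqueFinset 3) ^ 2 ≤ #G.edgeFinset ^ 3 := by
  let : LinearOrder V := LinearOrder.lift' _ (Fintype.equivFin V).injective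
  set T : Finset (V × V × V) := {p | p.1 < p.2.1 ∧ p.2.1 < p.2.2 ∧
      G.Adj p.1 p.2.1 ∧ G.Adj p.1 p.2.2 ∧ G.Adj p.2.1 p.2.2}
  set E : Finset (V × V) := {q | q.1 < q.2 ∧ G.Adj q.1 q.2}
  have hE : #E ≤ #G.edgeFinset := G.card_filter_lt_adj_le_card_edgeFinset
  have h₁₂ : T.image (fun p => (p.1, p.2.1)) ⊆ E := image_subset_iff.2 fun p hp => by
    simp only [T, E, mem_filter, mem_univ, true_and] at hp ⊢
    exact ⟨hp.1, hp.2.2.1⟩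
  have h₁₃ : T.image (fun p => (p.1, p.2.2)) ⊆ E := image_subset_iff.2 fun p hp => by
    simp only [T, E, mem_filter, mem_univ, true_and] at hp ⊢
    exact ⟨hp.1.trans hp.2.1, hp.2.2.2.1⟩
  have h₂₃ : T.image (fun p => (p.2.1, p.2.2)) ⊆ E := image_subset_iff.2 fun p hp => by
    simp only [T, E, mem_filter, mem_univ, true_and] at hp ⊢
    exact ⟨hp.2.1, hp.2.2.2.2⟩
  calc #(G.cliqueFinset 3) ^ 2 ≤ #T ^ 2 :=
        Nat.pow_le_pow_left (by convert G.card_cliqueFinset_three_le_card_filter) 2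
    _ ≤ #(T.image fun p => (p.1, p.2.1)) * #(T.image fun p => (p.1, p.2.2)) *
        #(T.image fun p => (p.2.1, p.2.2)) :=
        T.card_sq_le_card_image_mul_card_image_mul_card_image
    _ ≤ #E * #E * #E := by gcongr
    _ ≤ #G.edgeFinset ^ 3 := by
        rw [pow_three, ← mul_assoc]
        gcongr

end SimpleGraph

/-- For any finite simple graph with `e` edges, the number `T` of triangles (3-cliques) is
at most `e^{3/2}`; equivalently, `T² ≤ e³`. -/
theorem stmt_11 {V : Type*} [Fintype V] (G : SimpleGraph V) :
    ((Nat.card {s : Finset V // G.IsNClique 3 s} : ℝ)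
        ≤ (Nat.card G.edgeSet : ℝ) ^ ((3 : ℝ) / 2))
    ∧ (Nat.card {s : Finset V // G.IsNClique 3 s}) ^ 2 ≤ (Nat.card G.edgeSet) ^ 3 := by
  classical
  have h_sq : Nat.card {s : Finset V // G.IsNClique 3 s} ^ 2 ≤ Nat.card G.edgeSet ^ 3 := by
    rw [Nat.card_eq_fintype_card, Fintype.card_subtype, Nat.card_eq_fintype_card,
      ← SimpleGraph.edgeFinset_card]
    exact G.card_cliqueFinset_three_sq_le
  set T := Nat.card {s : Finset V // G.IsNClique 3 s}
  set e := Nat.card G.edgeSet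
  refine ⟨?_, h_sq⟩
  calc (T : ℝ) = √((T : ℝ) ^ 2) := (Real.sqrt_sq T.cast_nonneg).symm
    _ ≤ √((e : ℝ) ^ 3) := Real.sqrt_le_sqrt (by exact_mod_cast h_sq)
    _ = (e : ℝ) ^ ((3 : ℝ) / 2) := by
      rw [Real.sqrt_eq_rpow, ← Real.rpow_natCast, ← Real.rpow_mul e.cast_nonneg]
      norm_num
end

section
/- Let G be a simple graph on the vertex set {1,…,M} with its natural linear order, and suppose some vertex v is adjacent to every other vertex of G. Then for every m with v ≤ m and every j with m < j ≤ M, the vertex j is a fill-in neighbor of m; consequently n_{L,m} = M − m + 1 for every m ≥ v. -/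
/-- `n_{L,m}`: the number of fill-in neighbors `j` of `m` with `m ≤ j ≤ M`. -/
noncomputable def nLrow (G : SimpleGraph ℕ) (M m : ℕ) : ℕ :=
  Nat.card {j : ℕ // m ≤ j ∧ j ≤ M ∧ FillIn G m j}

/-!
A walk `m — v — j` through a hub `v < m` has its only internal vertex below `m`, so every
later vertex `j` is a fill-in neighbor of `m`; for `m = v` the edge `v — j` itself suffices.
-/

namespace FillIn

variable {G : SimpleGraph ℕ} {m u j : ℕ}

theorem of_adj (h : G.Adj m j) : FillIn G m j :=
  .inr ⟨h.toWalk, by simp⟩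

theorem of_adj_of_adj (hmu : G.Adj m u) (huj : G.Adj u j) (hum : u < m) : FillIn G m j :=
  .inr ⟨hmu.toWalk.append huj.toWalk, by
    simp only [SimpleGraph.Walk.support_append, SimpleGraph.Adj.support_toWalk, List.tail_cons,
      List.cons_append, List.nil_append, List.mem_cons, List.not_mem_nil, or_false]
    rintro x (rfl | rfl | rfl) <;> simp [hum]⟩

theorem of_le_of_hub {M v : ℕ} (hv : 1 ≤ v) (hadj : ∀ w ∈ Finset.Icc 1 M, w ≠ v → G.Adj v w)
    (hvm : v ≤ m) (hmj : m < j) (hjM : j ≤ M) : FillIn G m j := by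
  have hub : ∀ w, 1 ≤ w → w ≤ M → w ≠ v → G.Adj v w :=
    fun w h1 hM => hadj w (Finset.mem_Icc.2 ⟨h1, hM⟩)
  obtain rfl | hvm := hvm.eq_or_lt
  · exact of_adj (hub j (by omega) hjM hmj.ne')
  · exact of_adj_of_adj (hub m (by omega) (by omega) hvm.ne').symm
      (hub j (by omega) hjM (by omega)) hvm

end FillIn

theorem nLrow_eq_of_forall_fillIn {G : SimpleGraph ℕ} {M m : ℕ} (hmM : m ≤ M)
    (h : ∀ j, m < j → j ≤ M → FillIn G m j) : nLrow G M m = M - m + 1 := by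
  have hrow : ∀ j, (m ≤ j ∧ j ≤ M ∧ FillIn G m j) ↔ j ∈ Set.Icc m M := by
    refine fun j => ⟨fun ⟨hmj, hjM, _⟩ => ⟨hmj, hjM⟩, fun ⟨hmj, hjM⟩ => ⟨hmj, hjM, ?_⟩⟩
    obtain rfl | hmj := hmj.eq_or_lt
    · exact .inl rfl
    · exact h j hmj hjM
  rw [nLrow, Nat.card_congr (Equiv.subtypeEquivRight hrow), Nat.card_coe_set_eq,
    Set.ncard_Icc_nat]
  omega

/-- Key step in Proposition 2(a): if some vertex `v` of the graph `G` on `{1,…,M}` is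
adjacent to every other vertex, then for every `m ≥ v` every `j` with `m < j ≤ M` is a
fill-in neighbor of `m`; consequently `n_{L,m} = M - m + 1` for every `m ≥ v`. -/
theorem stmt_12 (M : ℕ) (G : SimpleGraph ℕ) (v : ℕ) (hv : v ∈ Finset.Icc 1 M)
    (hadj : ∀ w ∈ Finset.Icc 1 M, w ≠ v → G.Adj v w) :
    (∀ m, v ≤ m → m ≤ M → ∀ j, m < j → j ≤ M → FillIn G m j)
    ∧ (∀ m, v ≤ m → m ≤ M → nLrow G M m = M - m + 1) := by
  have fillIn : ∀ m, v ≤ m → m ≤ M → ∀ j, m < j → j ≤ M → FillIn G m j :=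
    fun _ hvm _ _ hmj hjM => FillIn.of_le_of_hub (Finset.mem_Icc.1 hv).1 hadj hvm hmj hjM
  exact ⟨fillIn, fun m hvm hmM => nLrow_eq_of_forall_fillIn hmM (fillIn m hvm hmM)⟩
end

section
/- Let G be a simple graph on the vertex set {1,…,M} with its natural linear order, and suppose every vertex has at most one neighbor with strictly larger index. Then for all m < j, the vertex j is a fill-in neighbor of m if and only if m and j are adjacent in G; consequently n_L = n_Q, where n_Q is the number of pairs (m,j) with m ≤ j such that j = m or m and j are adjacent. -/
namespace SimpleGraph

variable {V : Type*} [LinearOrder V]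

def AtMostOneLargerNeighbor (G : SimpleGraph V) : Prop :=
  ∀ a b c, a < b → a < c → G.Adj a b → G.Adj a c → b = c

theorem Walk.IsPath.end_le_start_of_adj_lt {G : SimpleGraph V} (hG : G.AtMostOneLargerNeighbor)
    {a b u : V} {p : G.Walk a b} (hp : p.IsPath) (hau : a < u) (hadj : G.Adj a u)
    (hu : u ∉ p.support) : b ≤ a := by
  induction p generalizing u with
  | nil => exact le_rfl
  | @cons a c b h p ih =>
    rw [cons_isPath_iff] at hp
    rw [support_cons, List.mem_cons, not_or] at hu
    have hca : c < a := by
      refine (h.ne.symm.lt_or_gt).resolve_right fun hac => hu.2 ?_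
      rw [← hG a c u hac hau h hadj]
      exact p.start_mem_support
    exact (ih hp.1 hca h.symm hp.2).trans hca.le

end SimpleGraph

open SimpleGraph

theorem fillIn_iff_adj {G : SimpleGraph ℕ} (hG : G.AtMostOneLargerNeighbor) {m j : ℕ}
    (hmj : m < j) : FillIn G m j ↔ G.Adj m j := by
  refine ⟨?_, fun h => .inr ⟨.cons h .nil, by simp⟩⟩
  rintro (rfl | ⟨w, hw⟩)
  · exact absurd hmj (lt_irrefl _)
  obtain ⟨c, h, p, hcons⟩ := Walk.exists_eq_cons_of_ne hmj.ne (w.toPath : G.Walk m j)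
  have hpath : (Walk.cons h p).IsPath := hcons ▸ (w.toPath).property
  have hc : c = m ∨ c = j ∨ c < m := hw c <| Walk.support_toPath_subset_support w <| by
    rw [hcons]; simp
  rw [Walk.cons_isPath_iff] at hpath
  rcases hc with rfl | rfl | hcm
  · exact absurd rfl h.ne
  · exact h
  · exact absurd (hpath.1.end_le_start_of_adj_lt hG hcm h.symm hpath.2) (hcm.trans hmj).not_ge

theorem fillIn_iff_eq_or_adj {G : SimpleGraph ℕ} (hG : G.AtMostOneLargerNeighbor) {m j : ℕ}
    (hmj : m ≤ j) : FillIn G m j ↔ j = m ∨ G.Adj m j := by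
  rcases hmj.eq_or_lt with rfl | hlt
  · simp [FillIn]
  · rw [fillIn_iff_adj hG hlt, or_iff_right hlt.ne']

/-- No fill-in for tree-like orderings (depth-last ordering of nested multilevel models):
if every vertex of `G` has at most one neighbor with strictly larger index, then for all
`m < j` the vertex `j` is a fill-in neighbor of `m` iff `m` and `j` are adjacent;
consequently `n_L = n_Q`, where `n_Q` counts the pairs `(m,j)` with `m ≤ j` such that
`j = m` or `m` and `j` are adjacent. -/
theorem stmt_14 (M : ℕ) (G : SimpleGraph ℕ)
    (hone : ∀ a b c : ℕ, a < b → a < c → G.Adj a b → G.Adj a c → b = c) :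
    (∀ m j, m < j → (FillIn G m j ↔ G.Adj m j))
    ∧ ∑ m ∈ Finset.Icc 1 M, nLrow G M m
        = ∑ m ∈ Finset.Icc 1 M,
            Nat.card {j : ℕ // m ≤ j ∧ j ≤ M ∧ (j = m ∨ G.Adj m j)} := by
  refine ⟨fun m j => fillIn_iff_adj hone, Finset.sum_congr rfl fun m _ => ?_⟩
  refine Nat.card_congr (Equiv.subtypeEquivRight fun j => ?_)
  exact and_congr_right fun hmj => and_congr_right fun _ => fillIn_iff_eq_or_adj hone hmj
end

section
/- Fix integers I and d with d even, 0 < d < I. Let G be the simple graph on the vertex set {1,…,2I+1} in which: vertex 2I+1 is adjacent to every other vertex; for 1 ≤ i ≤ I and 1 ≤ j ≤ I, vertex i is adjacent to vertex I+j if and only if min((i−j) mod I, (j−i) mod I) ≤ d/2; and there are no other edges. Then n_{L,m} ≤ 2(d+1) for every m ∈ {1,…,2I+1}, and hence n_L ≤ 2(d+1)(2I+1). -/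
/-- The conditional independence graph of the circulant two-factor crossed effects design
on the vertices `{1,…,2I+1}`: vertex `2I+1` (the intercept) is adjacent to every other
vertex, and for `1 ≤ i ≤ I`, `1 ≤ j ≤ I`, vertex `i` is adjacent to vertex `I+j` iff
`min((i-j) mod I, (j-i) mod I) ≤ d/2`; there are no other edges. -/
def circGraph (I d : ℕ) : SimpleGraph ℕ :=
  SimpleGraph.fromRel (fun a b =>
    (a ∈ Finset.Icc 1 (2 * I) ∧ b = 2 * I + 1) ∨
    (∃ i ∈ Finset.Icc 1 I, ∃ j ∈ Finset.Icc 1 I, a = i ∧ b = I + j ∧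
      min (((i : ℤ) - (j : ℤ)) % (I : ℤ)) (((j : ℤ) - (i : ℤ)) % (I : ℤ)) ≤ (d : ℤ) / 2))


/-!
Vertices `1, …, I` are only adjacent to later vertices, so a walk out of such a vertex `m`
has no admissible internal vertex: the fill-in neighbours of `m` are `m`, the intercept and
the at most `d + 1` second-factor vertices at circular distance `≤ d/2`.

For a second-factor vertex `I + k`, the admissible internal vertices are first-factor vertices
and second-factor vertices `I + q` with `q < k`. Along such a walk every first-factor vertex is
within `d/2` of some `q ≤ k`, so when the walk reaches `I + l` with `l > k`, the position `l` is
within circular distance `d` of `[1, k]`, i.e. `l ∈ (k, k + d] ∪ [I + 1 - d, I]`.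
-/

section FillIn

variable {G : SimpleGraph ℕ} {m j : ℕ}

theorem FillIn.of_closed (P : ℕ → Prop) (hm : P m)
    (hP : ∀ v w, v ≤ m → P v → G.Adj v w → P w) (h : FillIn G m j) : P j := by
  have walk : ∀ x (p : G.Walk x j), P x → (∀ v ∈ p.support, v = j ∨ v ≤ m) → P j := by
    clear h
    intro x p
    induction p with
    | nil => exact fun hx _ => hx
    | @cons x y _ hxy p ih =>
      intro hx hsupp
      rcases hsupp x (by simp) with rfl | hxm
      · exact hx
      · exact ih (hP x y hxm hx hxy) fun v hv => hsupp v (List.mem_cons_of_mem x hv)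
  rcases h with rfl | ⟨w, hw⟩
  · exact hm
  · exact walk m w hm fun v hv => by rcases hw v hv with h | h | h <;> omega

theorem FillIn.eq_or_adj (hm : ∀ w, G.Adj m w → m < w) (h : FillIn G m j) :
    j = m ∨ G.Adj m j := by
  refine h.of_closed (fun w => w = m ∨ G.Adj m w) (Or.inl rfl) ?_
  rintro v w hvm (rfl | hv) hvw
  · exact Or.inr hvw
  · exact absurd (hm v hv) (by omega)

theorem nLrow_le_card {M : ℕ} (S : Finset ℕ)
    (hS : ∀ j, m ≤ j → j ≤ M → FillIn G m j → j ∈ S) : nLrow G M m ≤ S.card := by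
  calc nLrow G M m = Set.ncard {j | m ≤ j ∧ j ≤ M ∧ FillIn G m j} := Nat.card_coe_set_eq _
    _ ≤ (S : Set ℕ).ncard :=
        Set.ncard_le_ncard (fun j hj => hS j hj.1 hj.2.1 hj.2.2) S.finite_toSet
    _ = S.card := Set.ncard_coe_finset S

theorem nLrow_le_card_add_two {M : ℕ} (a : ℕ) (T : Finset ℕ)
    (hT : ∀ j, m ≤ j → j ≤ M → FillIn G m j → j = m ∨ j = M ∨ ∃ l ∈ T, j = a + l) :
    nLrow G M m ≤ T.card + 2 := by
  calc nLrow G M m ≤ (insert m (insert M (T.image (a + ·)))).card := by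
        refine nLrow_le_card _ fun j hj hjM hf => ?_
        rcases hT j hj hjM hf with rfl | rfl | ⟨l, hl, rfl⟩ <;> simp [*]
    _ ≤ (T.image (a + ·)).card + 2 :=
        (Finset.card_insert_le _ _).trans (Nat.succ_le_succ (Finset.card_insert_le _ _))
    _ ≤ T.card + 2 := Nat.add_le_add_right Finset.card_image_le _

end FillIn

section circGraph

variable {I d : ℕ}

/-- Circular distance at most `r` modulo `I` between positions `a, b ∈ [1, I]`, written as
linear inequalities. -/
def CircNear (I r a b : ℕ) : Prop :=
  (a ≤ b + r ∧ b ≤ a + r) ∨ a + I ≤ b + r ∨ b + I ≤ a + r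

theorem Int.emod_eq_sub_or_add {I a b : ℤ} (hab : a < b + I) (hba : b < a + I) :
    (b ≤ a ∧ (a - b) % I = a - b) ∨ (a < b ∧ (a - b) % I = a - b + I) := by
  rcases le_or_gt b a with h | h
  · exact Or.inl ⟨h, Int.emod_eq_of_lt (by omega) (by omega)⟩
  · refine Or.inr ⟨h, ?_⟩
    rw [← Int.add_emod_right, Int.emod_eq_of_lt (by omega) (by omega)]

theorem circNear_of_min_emod_le {a b r : ℕ} (hab : a < b + I) (hba : b < a + I)
    (h : min (((a : ℤ) - b) % I) (((b : ℤ) - a) % I) ≤ r) : CircNear I r a b := by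
  rw [min_le_iff] at h
  unfold CircNear
  rcases Int.emod_eq_sub_or_add (I := I) (a := a) (b := b) (by omega) (by omega) with h₁ | h₁ <;>
  rcases Int.emod_eq_sub_or_add (I := I) (a := b) (b := a) (by omega) (by omega) with h₂ | h₂ <;>
  omega

theorem circGraph_adj_cases {a b : ℕ} (h : (circGraph I d).Adj a b) :
    a = 2 * I + 1 ∨ b = 2 * I + 1 ∨ ∃ i l, 1 ≤ i ∧ i ≤ I ∧ 1 ≤ l ∧ l ≤ I ∧
      CircNear I (d / 2) i l ∧ (a = i ∧ b = I + l ∨ a = I + l ∧ b = i) := by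
  have near : ∀ i l, 1 ≤ i → i ≤ I → 1 ≤ l → l ≤ I →
      min (((i : ℤ) - l) % I) (((l : ℤ) - i) % I) ≤ (d : ℤ) / 2 → CircNear I (d / 2) i l :=
    fun i l hi hiI hl hlI hmin =>
      circNear_of_min_emod_le (by omega) (by omega) (by push_cast; exact hmin)
  simp only [circGraph, SimpleGraph.fromRel_adj, Finset.mem_Icc] at h
  rcases h.2 with (⟨-, hb⟩ | ⟨i, ⟨hi, hiI⟩, l, ⟨hl, hlI⟩, ha, hb, hmin⟩) |
    (⟨-, ha⟩ | ⟨i, ⟨hi, hiI⟩, l, ⟨hl, hlI⟩, hb, ha, hmin⟩)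
  · exact Or.inr (Or.inl hb)
  · exact Or.inr (Or.inr ⟨i, l, hi, hiI, hl, hlI, near i l hi hiI hl hlI hmin, Or.inl ⟨ha, hb⟩⟩)
  · exact Or.inl ha
  · exact Or.inr (Or.inr ⟨i, l, hi, hiI, hl, hlI, near i l hi hiI hl hlI hmin, Or.inr ⟨ha, hb⟩⟩)

theorem circGraph_adj_first {i w : ℕ} (hi : 1 ≤ i) (hiI : i ≤ I)
    (h : (circGraph I d).Adj i w) :
    w = 2 * I + 1 ∨ ∃ l, 1 ≤ l ∧ l ≤ I ∧ w = I + l ∧ CircNear I (d / 2) i l := by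
  rcases circGraph_adj_cases h with h | h | ⟨i', l, -, -, hl, hlI, hnear, ⟨rfl, rfl⟩ | ⟨h₁, -⟩⟩
  · omega
  · exact Or.inl h
  · exact Or.inr ⟨l, hl, hlI, rfl, hnear⟩
  · omega

theorem circGraph_adj_second {q w : ℕ} (hq : 1 ≤ q) (hqI : q ≤ I)
    (h : (circGraph I d).Adj (I + q) w) :
    w = 2 * I + 1 ∨ 1 ≤ w ∧ w ≤ I ∧ CircNear I (d / 2) w q := by
  rcases circGraph_adj_cases h with h | h | ⟨i, l, hi, hiI, -, -, hnear, ⟨h₁, -⟩ | ⟨h₁, rfl⟩⟩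
  · omega
  · exact Or.inl h
  · omega
  · obtain rfl : l = q := by omega
    exact Or.inr ⟨hi, hiI, hnear⟩

theorem nLrow_circGraph_first (hd : 0 < d) {m : ℕ} (hm : 1 ≤ m) (hmI : m ≤ I) :
    nLrow (circGraph I d) (2 * I + 1) m ≤ 2 * (d + 1) := by
  let T := Finset.Icc (max (m - d / 2) 1) (min (m + d / 2) I) ∪
    Finset.Icc (max (I + m - d / 2) 1) I ∪ Finset.Icc 1 (m + d / 2 - I)
  have hT : T.card ≤ d + 1 := by
    grw [Finset.card_union_le, Finset.card_union_le]
    simp only [Nat.card_Icc]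
    omega
  have fillIn_mem : ∀ j, m ≤ j → j ≤ 2 * I + 1 → FillIn (circGraph I d) m j →
      j = m ∨ j = 2 * I + 1 ∨ ∃ l ∈ T, j = I + l := by
    intro j _ _ hf
    have later : ∀ w, (circGraph I d).Adj m w → m < w := fun w hw => by
      rcases circGraph_adj_first hm hmI hw with rfl | ⟨l, hl, -, rfl, -⟩ <;> omega
    rcases hf.eq_or_adj later with rfl | hadj
    · exact Or.inl rfl
    rcases circGraph_adj_first hm hmI hadj with rfl | ⟨l, hl, hlI, rfl, hnear⟩
    · exact Or.inr (Or.inl rfl)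
    refine Or.inr (Or.inr ⟨l, ?_, rfl⟩)
    simp only [T, CircNear, Finset.mem_union, Finset.mem_Icc] at hnear ⊢
    omega
  have := nLrow_le_card_add_two I T fillIn_mem
  omega

theorem circGraph_fillIn_second {k j : ℕ} (hk : 1 ≤ k) (hkI : k ≤ I)
    (h : FillIn (circGraph I d) (I + k) j) :
    j = 2 * I + 1 ∨ j ≤ I ∨ ∃ l, 1 ≤ l ∧ l ≤ I ∧ j = I + l ∧ (l ≤ k + d ∨ I + 1 ≤ l + d) := by
  let P : ℕ → Prop := fun v => v = 2 * I + 1 ∨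
    (1 ≤ v ∧ v ≤ I ∧ ∃ q, 1 ≤ q ∧ q ≤ k ∧ CircNear I (d / 2) v q) ∨
    ∃ l, 1 ≤ l ∧ l ≤ I ∧ v = I + l ∧ (l ≤ k + d ∨ I + 1 ≤ l + d)
  have closed : ∀ v w, v ≤ I + k → P v → (circGraph I d).Adj v w → P w := by
    rintro v w hv (rfl | ⟨hv1, hvI, q, hq, hqk, hvq⟩ | ⟨l, hl, hlI, rfl, -⟩) hvw
    · omega
    · rcases circGraph_adj_first hv1 hvI hvw with rfl | ⟨l, hl, hlI, rfl, hvl⟩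
      · exact Or.inl rfl
      -- two steps of circular length `≤ d/2` from `q ≤ k`
      refine Or.inr (Or.inr ⟨l, hl, hlI, rfl, ?_⟩)
      unfold CircNear at hvq hvl
      omega
    · rcases circGraph_adj_second hl hlI hvw with rfl | ⟨hw, hwI, hwl⟩
      · exact Or.inl rfl
      · exact Or.inr (Or.inl ⟨hw, hwI, l, hl, by omega, hwl⟩)
  rcases h.of_closed P (Or.inr (Or.inr ⟨k, hk, hkI, rfl, by omega⟩)) closed with
    h | ⟨-, h, -⟩ | h
  · exact Or.inl h
  · exact Or.inr (Or.inl h)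
  · exact Or.inr (Or.inr h)

theorem nLrow_circGraph_second {k : ℕ} (hk : 1 ≤ k) (hkI : k ≤ I) :
    nLrow (circGraph I d) (2 * I + 1) (I + k) ≤ 2 * (d + 1) := by
  let T := Finset.Icc (k + 1) (k + d) ∪ Finset.Icc (I + 1 - d) I
  have hT : T.card ≤ 2 * d := by
    grw [Finset.card_union_le]
    simp only [Nat.card_Icc]
    omega
  have fillIn_mem : ∀ j, I + k ≤ j → j ≤ 2 * I + 1 → FillIn (circGraph I d) (I + k) j →
      j = I + k ∨ j = 2 * I + 1 ∨ ∃ l ∈ T, j = I + l := by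
    intro j hj hjM hf
    rcases circGraph_fillIn_second hk hkI hf with h | h | ⟨l, -, hlI, rfl, hl⟩
    · exact Or.inr (Or.inl h)
    · omega
    · rcases eq_or_lt_of_le hj with h | h
      · exact Or.inl h.symm
      refine Or.inr (Or.inr ⟨l, ?_, rfl⟩)
      simp only [T, Finset.mem_union, Finset.mem_Icc]
      omega
  have := nLrow_le_card_add_two I T fillIn_mem
  omega

theorem nLrow_circGraph_le (hd : 0 < d) {m : ℕ} (hm : m ∈ Finset.Icc 1 (2 * I + 1)) :
    nLrow (circGraph I d) (2 * I + 1) m ≤ 2 * (d + 1) := by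
  rw [Finset.mem_Icc] at hm
  rcases le_or_gt m I with hmI | hIm
  · exact nLrow_circGraph_first hd hm.1 hmI
  rcases le_or_gt m (2 * I) with hm2I | hm2I
  · obtain ⟨k, rfl⟩ : ∃ k, m = I + k := ⟨m - I, by omega⟩
    exact nLrow_circGraph_second (by omega) (by omega)
  · calc nLrow (circGraph I d) (2 * I + 1) m ≤ ({m} : Finset ℕ).card :=
          nLrow_le_card _ fun j hj hjM _ => Finset.mem_singleton.2 (by omega)
      _ ≤ 2 * (d + 1) := by simp only [Finset.card_singleton]; omega

end circGraph

theorem stmt_15_general (I d : ℕ) (hd0 : 0 < d) :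
    (∀ m ∈ Finset.Icc 1 (2 * I + 1), nLrow (circGraph I d) (2 * I + 1) m ≤ 2 * (d + 1))
    ∧ ∑ m ∈ Finset.Icc 1 (2 * I + 1), nLrow (circGraph I d) (2 * I + 1) m
        ≤ 2 * (d + 1) * (2 * I + 1) := by
  refine ⟨fun m hm => nLrow_circGraph_le hd0 hm, ?_⟩
  calc ∑ m ∈ Finset.Icc 1 (2 * I + 1), nLrow (circGraph I d) (2 * I + 1) m
      ≤ (Finset.Icc 1 (2 * I + 1)).card • (2 * (d + 1)) :=
        Finset.sum_le_card_nsmul _ _ _ fun m hm => nLrow_circGraph_le hd0 hm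
    _ = 2 * (d + 1) * (2 * I + 1) := by simp [mul_comm]

/-- Key fill-in bound in Proposition 4 (favourable circulant design): for the circulant
crossed effects graph with even `0 < d < I`, every row fill-in count satisfies
`n_{L,m} ≤ 2(d+1)`, and hence `n_L ≤ 2(d+1)(2I+1)`. -/
theorem stmt_15 (I d : ℕ) (hEven : Even d) (hd0 : 0 < d) (hdI : d < I) :
    (∀ m ∈ Finset.Icc 1 (2 * I + 1), nLrow (circGraph I d) (2 * I + 1) m ≤ 2 * (d + 1))
    ∧ ∑ m ∈ Finset.Icc 1 (2 * I + 1), nLrow (circGraph I d) (2 * I + 1) m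
        ≤ 2 * (d + 1) * (2 * I + 1) :=
  stmt_15_general I d hd0
end

section
/- Fix integers I and d with d even, 0 < d < I. Let G be the simple graph on the vertex set {1,…,2I+1} in which: vertex 2I+1 is adjacent to every other vertex; for 1 ≤ i ≤ I and 1 ≤ j ≤ I, vertex i is adjacent to vertex I+j if and only if min((i−j) mod I, (j−i) mod I) ≤ d/2; and there are no other edges. Let n_Q = Σ_{m=1}^{2I+1} n_{Q,m}, where n_{Q,m} is the number of vertices j (over the full range 1 ≤ j ≤ 2I+1) with j = m or j adjacent to m. Then n_Q = 1 + 6I + 2(d+1)I, and n_L ≤ 3·n_Q. -/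
/-- `n_{Q,m}`: the number of vertices `j` in the full range `1 ≤ j ≤ M` with `j = m` or
`j` adjacent to `m`. -/
noncomputable def nQrow (G : SimpleGraph ℕ) (M m : ℕ) : ℕ :=
  Nat.card {j : ℕ // 1 ≤ j ∧ j ≤ M ∧ (j = m ∨ G.Adj m j)}

/-!
Each row `m ≤ 2I` has `d+3` closed neighbours: itself, the intercept, and a window of `d+1`
vertices of the other factor (circular distance at most `r = d/2`); the intercept row has `2I+1`.
This gives `n_Q`.

A row of the first factor has no smaller neighbours, so its fill-in neighbours are its neighbours.
A walk from a row `I+c` of the second factor through smaller vertices meets only vertices `I+k`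
with `k ≤ c` and first-factor vertices within distance `r` of such a `k`; so its endpoint `I+k'`
is within circular distance `2r = d` of some `k ≤ c`, i.e. `k' ≤ c + d` or `k'` lies among the
last `d` positions. Hence `n_{L,m} ≤ 2d+2 ≤ 3 n_{Q,m}` for every row.
-/

open Finset

def circDist (n : ℕ) (x y : ℤ) : ℕ :=
  ((x - y : ℤ) : ZMod n).valMinAbs.natAbs

theorem ZMod.valMinAbs_intCast_of_two_mul_abs_lt {n : ℕ} {t : ℤ} (ht : 2 * |t| < n) :
    (t : ZMod n).valMinAbs = t := by
  have : NeZero n := ⟨by rintro rfl; cases abs_cases t <;> omega⟩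
  rw [ZMod.valMinAbs_spec]
  refine ⟨rfl, ?_, ?_⟩ <;> cases abs_cases t <;> omega

namespace circDist

variable {n : ℕ}

theorem comm (x y : ℤ) : circDist n x y = circDist n y x := by
  rw [circDist, circDist, ← neg_sub, Int.cast_neg, ZMod.natAbs_valMinAbs_neg]

theorem triangle (x y z : ℤ) : circDist n x z ≤ circDist n x y + circDist n y z := by
  unfold circDist
  rw [show x - z = (x - y) + (y - z) by ring, Int.cast_add]
  exact (ZMod.natAbs_valMinAbs_add_le _ _).trans (Int.natAbs_add_le _ _)

theorem add_self_right (x y : ℤ) : circDist n x (n + y) = circDist n x y := by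
  simp [circDist, sub_add_eq_sub_sub]

theorem natCast_eq_min [NeZero n] (x y : ℤ) :
    (circDist n x y : ℤ) = min ((x - y) % n) ((y - x) % n) := by
  have hy : (y - x) % n = (-((x - y : ℤ) : ZMod n)).val := by
    rw [← neg_sub, ← ZMod.val_intCast, Int.cast_neg]
  rw [circDist, ZMod.valMinAbs_natAbs_eq_min, ← ZMod.val_intCast, hy]
  generalize ((x - y : ℤ) : ZMod n) = a
  rw [ZMod.neg_val]
  split_ifs with h
  · simp [h]
  · have := a.val_lt
    omega

theorem natCast_eq_min_of_lt {x y : ℤ} (hxy : x < y) (hyx : y < x + n) :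
    (circDist n x y : ℤ) = min (y - x) (n - (y - x)) := by
  have : NeZero n := ⟨by omega⟩
  rw [natCast_eq_min, Int.emod_eq_of_lt (by omega) (by omega : y - x < n),
    ← Int.add_mul_emod_self_right (x - y) 1 n, Int.emod_eq_of_lt (by omega) (by omega)]
  omega

theorem card_filter_Ioc_le (c : ℕ) (a : ℤ) {r : ℕ} (hr : 2 * r < n) :
    #{b ∈ Ioc c (c + n) | circDist n a (b : ℕ) ≤ r} = 2 * r + 1 := by
  have hn : (0 : ℤ) < n := by omega
  have hcard : #(Icc (-(r : ℤ)) r) = 2 * r + 1 := by simp; omega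
  have hvalMinAbs : ∀ t ∈ Icc (-(r : ℤ)) r, (t : ZMod n).valMinAbs = t := fun t ht => by
    rw [mem_Icc] at ht
    exact ZMod.valMinAbs_intCast_of_two_mul_abs_lt (by cases abs_cases t <;> omega)
  have hcast : ∀ t : ℤ, ((a - (c + 1 + ((a - t - c - 1) % n).toNat : ℕ) : ℤ) : ZMod n) = t :=
    fun t => by
      push_cast [Int.toNat_of_nonneg (Int.emod_nonneg _ hn.ne'), ZMod.intCast_mod]
      ring
  rw [← hcard]
  refine card_bij' (fun b _ => ((a - b : ℤ) : ZMod n).valMinAbs)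
    (fun t _ => c + 1 + ((a - t - c - 1) % n).toNat) ?_ ?_ ?_ ?_
  · intro b hb
    rw [mem_filter, circDist] at hb
    rw [mem_Icc]
    omega
  · intro t ht
    have h0 := Int.emod_nonneg (a - t - c - 1) hn.ne'
    have h1 := Int.emod_lt_of_pos (a - t - c - 1) hn
    rw [mem_filter, mem_Ioc, circDist, hcast, hvalMinAbs t ht]
    rw [mem_Icc] at ht
    omega
  · intro b hb
    rw [mem_filter, mem_Ioc] at hb
    have hmod : (a - ((a - b : ℤ) : ZMod n).valMinAbs - c - 1) % n = b - c - 1 := by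
      rw [← Int.emod_eq_of_lt (a := (b : ℤ) - c - 1) (b := n) (by omega) (by omega),
        ← ZMod.intCast_eq_intCast_iff']
      push_cast [ZMod.coe_valMinAbs]
      ring
    simp only [hmod]
    omega
  · intro t ht
    simp only [hcast, hvalMinAbs t ht]

end circDist

theorem SimpleGraph.Walk.eq_or_exists_adj_of_forall_support {V : Type*} {G : SimpleGraph V}
    {U P : V → Prop} (hP : ∀ u v, P u → G.Adj u v → U v → P v) {a b : V} (w : G.Walk a b)
    (ha : P a) (hw : ∀ v ∈ w.support, U v ∨ v = b) : b = a ∨ ∃ u, P u ∧ G.Adj u b := by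
  induction w with
  | nil => exact Or.inl rfl
  | @cons a v b hav p ih =>
    right
    rcases hw v (List.mem_cons_of_mem _ p.start_mem_support) with hv | rfl
    · rcases ih (hP a v ha hav hv) (fun x hx => hw x (List.mem_cons_of_mem _ hx)) with rfl | h
      · exact ⟨a, ha, hav⟩
      · exact h
    · exact ⟨a, ha, hav⟩

theorem FillIn.eq_or_exists_adj {G : SimpleGraph ℕ} {m j : ℕ} (h : FillIn G m j)
    (P : ℕ → Prop) (hm : P m) (hP : ∀ u v, P u → G.Adj u v → v ≤ m → P v) :
    j = m ∨ ∃ u, P u ∧ G.Adj u j := by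
  rcases h with rfl | ⟨w, hw⟩
  · exact Or.inl rfl
  · exact w.eq_or_exists_adj_of_forall_support hP hm fun v hv => by have := hw v hv; omega

theorem natCard_subtype_eq_card {α : Type*} {p : α → Prop} {T : Finset α}
    (h : ∀ j, p j ↔ j ∈ T) : Nat.card {j // p j} = #T :=
  (Nat.card_congr (Equiv.subtypeEquivRight h)).trans (Nat.card_eq_finsetCard T)

theorem natCard_subtype_le_card {α : Type*} {p : α → Prop} {T : Finset α}
    (h : ∀ j, p j → j ∈ T) : Nat.card {j // p j} ≤ #T :=
  (Nat.card_mono T.finite_toSet h).trans_eq (Nat.card_eq_finsetCard T)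

theorem nLrow_le_nQrow {G : SimpleGraph ℕ} {M m : ℕ} (hm : 1 ≤ m)
    (h : ∀ j, m ≤ j → FillIn G m j → j = m ∨ G.Adj m j) : nLrow G M m ≤ nQrow G M m :=
  Nat.card_mono ((Set.finite_Icc 1 M).subset fun _ hj => ⟨hj.1, hj.2.1⟩)
    fun j ⟨hmj, hjM, hj⟩ => ⟨by omega, hjM, h j hmj hj⟩

theorem nLrow_self_le_one (G : SimpleGraph ℕ) (M : ℕ) : nLrow G M M ≤ 1 :=
  natCard_subtype_le_card (T := {M}) fun j hj => mem_singleton.2 (by omega)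

namespace circGraph

theorem cross_iff {I : ℕ} (hI : 0 < I) (d a b : ℕ) :
    (∃ i ∈ Icc 1 I, ∃ j ∈ Icc 1 I, a = i ∧ b = I + j ∧
      min (((i : ℤ) - (j : ℤ)) % (I : ℤ)) (((j : ℤ) - (i : ℤ)) % (I : ℤ)) ≤ (d : ℤ) / 2) ↔
    1 ≤ a ∧ a ≤ I ∧ I < b ∧ b ≤ 2 * I ∧ circDist I a b ≤ d / 2 := by
  have : NeZero I := ⟨hI.ne'⟩
  have hdist (i j : ℕ) : circDist I i (I + j : ℕ) = circDist I i j := by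
    push_cast; exact circDist.add_self_right _ _
  constructor
  · rintro ⟨i, hi, j, hj, rfl, rfl, h⟩
    rw [mem_Icc] at hi hj
    have := circDist.natCast_eq_min (n := I) a j
    rw [hdist]
    omega
  · rintro ⟨ha1, ha2, hb1, hb2, h⟩
    obtain ⟨j, rfl⟩ : ∃ j, b = I + j := ⟨b - I, by omega⟩
    have := circDist.natCast_eq_min (n := I) a j
    rw [hdist] at h
    exact ⟨a, mem_Icc.2 ⟨ha1, ha2⟩, j, mem_Icc.2 ⟨by omega, by omega⟩, rfl, rfl, by omega⟩

theorem adj_iff {I : ℕ} (hI : 0 < I) (d a b : ℕ) :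
    (circGraph I d).Adj a b ↔
      (1 ≤ a ∧ a ≤ 2 * I ∧ b = 2 * I + 1) ∨ (1 ≤ b ∧ b ≤ 2 * I ∧ a = 2 * I + 1) ∨
      (1 ≤ a ∧ a ≤ 2 * I ∧ 1 ≤ b ∧ b ≤ 2 * I ∧ (a ≤ I ↔ I < b) ∧ circDist I a b ≤ d / 2) := by
  rw [circGraph, SimpleGraph.fromRel_adj, cross_iff hI, cross_iff hI,
    circDist.comm (b : ℤ), mem_Icc, mem_Icc]
  omega

variable {I d m j : ℕ}

theorem fillIn_of_le (hI : 0 < I) (hm : m ≤ I) (h : FillIn (circGraph I d) m j) :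
    j = m ∨ (circGraph I d).Adj m j := by
  have hP : ∀ u v, u = m → (circGraph I d).Adj u v → v ≤ m → v = m := by
    rintro u v rfl huv hv
    rw [adj_iff hI] at huv
    omega
  exact (h.eq_or_exists_adj (· = m) rfl hP).imp_right fun ⟨_, hu, huj⟩ => hu ▸ huj

theorem fillIn_of_lt (hI : 0 < I) (hm : I < m) (hm2 : m ≤ 2 * I) (hj : j ≤ 2 * I + 1)
    (h : FillIn (circGraph I d) m j) : j ≤ m + 2 * (d / 2) ∨ 2 * I + 1 ≤ j + 2 * (d / 2) := by
  -- holds all along a walk from `m` through vertices `≤ m`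
  let P : ℕ → Prop := fun v =>
    1 ≤ v ∧ v ≤ m ∧ (v ≤ I → ∃ k, I < k ∧ k ≤ m ∧ circDist I v k ≤ d / 2)
  have hP : ∀ u v, P u → (circGraph I d).Adj u v → v ≤ m → P v := by
    rintro u v ⟨hu1, hum, hu⟩ huv hvm
    rw [adj_iff hI] at huv
    refine ⟨by omega, hvm, fun hvI => ⟨u, by omega, hum, ?_⟩⟩
    rw [circDist.comm]; omega
  rcases h.eq_or_exists_adj P ⟨by omega, le_rfl, by omega⟩ hP with rfl | ⟨u, ⟨hu1, hum, hu⟩, huj⟩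
  · omega
  by_cases hjm : j ≤ m ∨ j = 2 * I + 1
  · omega
  rw [adj_iff hI] at huj
  have huj' : circDist I u j ≤ d / 2 := by omega
  obtain ⟨k, hIk, hkm, hku⟩ := hu (by omega)
  have hkj := (circDist.triangle (n := I) k u j).trans
    (add_le_add (le_of_eq_of_le (circDist.comm _ _) hku) huj')
  have := circDist.natCast_eq_min_of_lt (n := I) (x := k) (y := j) (by omega) (by omega)
  omega

theorem card_cross_neighbors (hdI : d < I) :
    #{k ∈ Icc 1 (2 * I) | (m ≤ I ↔ I < k) ∧ circDist I m k ≤ d / 2} = 2 * (d / 2) + 1 := by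
  obtain ⟨c, hc⟩ : ∃ c, ∀ k, (k ∈ Icc 1 (2 * I) ∧ (m ≤ I ↔ I < k)) ↔ k ∈ Ioc c (c + I) := by
    by_cases hmI : m ≤ I
    · exact ⟨I, fun k => by simp only [mem_Icc, mem_Ioc]; omega⟩
    · exact ⟨0, fun k => by simp only [mem_Icc, mem_Ioc]; omega⟩
  rw [← circDist.card_filter_Ioc_le (n := I) c m (r := d / 2) (by omega)]
  congr 1
  ext k
  simp only [mem_filter, ← hc, and_assoc]

theorem nQrow_eq (hdI : d < I) (hm1 : 1 ≤ m) (hm2 : m ≤ 2 * I) :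
    nQrow (circGraph I d) (2 * I + 1) m = 2 * (d / 2) + 3 := by
  have hI : 0 < I := by omega
  rw [nQrow, natCard_subtype_eq_card (T := insert m (insert (2 * I + 1)
      {k ∈ Icc 1 (2 * I) | (m ≤ I ↔ I < k) ∧ circDist I m k ≤ d / 2})),
    card_insert_of_notMem, card_insert_of_notMem, card_cross_neighbors hdI]
  · simp only [mem_filter, mem_Icc]; omega
  · simp only [mem_insert, mem_filter, mem_Icc]; omega
  · intro j
    simp only [mem_insert, mem_filter, mem_Icc, adj_iff hI]
    omega

theorem nQrow_top (hI : 0 < I) : nQrow (circGraph I d) (2 * I + 1) (2 * I + 1) = 2 * I + 1 := by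
  rw [nQrow, natCard_subtype_eq_card (T := Icc 1 (2 * I + 1)), Nat.card_Icc]
  · omega
  · intro j
    simp only [mem_Icc, adj_iff hI, and_true]
    omega

theorem nLrow_le_of_lt (hI : 0 < I) (hm : I < m) (hm2 : m ≤ 2 * I) :
    nLrow (circGraph I d) (2 * I + 1) m ≤ 4 * (d / 2) + 2 := by
  calc nLrow (circGraph I d) (2 * I + 1) m
      ≤ #(Icc m (m + 2 * (d / 2)) ∪ Icc (2 * I + 1 - 2 * (d / 2)) (2 * I + 1)) :=
        natCard_subtype_le_card fun j ⟨hmj, hj, h⟩ => by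
          have := fillIn_of_lt hI hm hm2 hj h
          simp only [mem_union, mem_Icc]
          omega
    _ ≤ 4 * (d / 2) + 2 := (card_union_le _ _).trans (by simp only [Nat.card_Icc]; omega)

theorem nLrow_le_three_mul_nQrow (hdI : d < I) (hm1 : 1 ≤ m) (hm2 : m ≤ 2 * I + 1) :
    nLrow (circGraph I d) (2 * I + 1) m ≤ 3 * nQrow (circGraph I d) (2 * I + 1) m := by
  have hI : 0 < I := by omega
  rcases le_or_gt m I with hmI | hmI
  · exact (nLrow_le_nQrow hm1 fun _ _ => fillIn_of_le hI hmI).trans (by omega)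
  rcases le_or_gt m (2 * I) with hm2I | hm2I
  · rw [nQrow_eq hdI hm1 hm2I]
    have := nLrow_le_of_lt (d := d) hI hmI hm2I
    omega
  · obtain rfl : m = 2 * I + 1 := by omega
    rw [nQrow_top hI]
    have := nLrow_self_le_one (circGraph I d) (2 * I + 1)
    omega

end circGraph

theorem stmt_16_general (I d : ℕ) (hEven : Even d) (hdI : d < I) :
    (∑ m ∈ Finset.Icc 1 (2 * I + 1), nQrow (circGraph I d) (2 * I + 1) m
        = 1 + 6 * I + 2 * (d + 1) * I)
    ∧ ∑ m ∈ Finset.Icc 1 (2 * I + 1), nLrow (circGraph I d) (2 * I + 1) m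
        ≤ 3 * ∑ m ∈ Finset.Icc 1 (2 * I + 1), nQrow (circGraph I d) (2 * I + 1) m := by
  refine ⟨?_, ?_⟩
  · rw [sum_Icc_succ_top (by omega), circGraph.nQrow_top (by omega),
      sum_congr rfl fun m hm => circGraph.nQrow_eq hdI (mem_Icc.1 hm).1 (mem_Icc.1 hm).2, sum_const,
      Nat.card_Icc, smul_eq_mul]
    obtain ⟨r, rfl⟩ := hEven
    rw [show (r + r) / 2 = r by omega, Nat.add_sub_cancel]
    ring
  · rw [mul_sum]
    exact sum_le_sum fun m hm =>
      circGraph.nLrow_le_three_mul_nQrow hdI (mem_Icc.1 hm).1 (mem_Icc.1 hm).2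

/-- Conclusion of Proposition 4 (favourable circulant design): with
`n_Q = Σ_{m=1}^{2I+1} n_{Q,m}`, one has `n_Q = 1 + 6I + 2(d+1)I`, and the fill-in
`n_L = Σ_{m=1}^{2I+1} n_{L,m}` satisfies `n_L ≤ 3 n_Q`. -/
theorem stmt_16 (I d : ℕ) (hEven : Even d) (hd0 : 0 < d) (hdI : d < I) :
    (∑ m ∈ Finset.Icc 1 (2 * I + 1), nQrow (circGraph I d) (2 * I + 1) m
        = 1 + 6 * I + 2 * (d + 1) * I)
    ∧ ∑ m ∈ Finset.Icc 1 (2 * I + 1), nLrow (circGraph I d) (2 * I + 1) m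
        ≤ 3 * ∑ m ∈ Finset.Icc 1 (2 * I + 1), nQrow (circGraph I d) (2 * I + 1) m :=
  stmt_16_general I d hEven hdI
end

section
/- Fix integers I ≥ 1 and d ≥ 2, and define r(1) = 1 and r(j) = ⌈(j−1)/d⌉ for 2 ≤ j ≤ I. Let G be any simple graph on the vertex set {1,…,2I+1} (vertices 1,…,I representing levels of the first factor, vertices I+1,…,2I levels of the second factor, vertex 2I+1 the intercept) that contains, for every j ∈ {1,…,I}, the edges {j, I+j} and {r(j), I+j}. Then for every j ∈ {1,…,I} and every m with r(j) ≤ m ≤ j, the vertex I+j is a fill-in neighbor of I+m. Consequently, n_L ≥ Σ_{j=2}^{I} (j − r(j) + 1). -/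
/-- `r(1) = 1` and `r(j) = ⌈(j-1)/d⌉` for `j ≥ 2`. -/
def rfun (d j : ℕ) : ℕ := if j = 1 then 1 else (j - 1 + d - 1) / d

open Finset SimpleGraph

def ReachableAtMost (G : SimpleGraph ℕ) (n a b : ℕ) : Prop :=
  ∃ w : G.Walk a b, ∀ v ∈ w.support, v ≤ n

namespace ReachableAtMost

variable {G : SimpleGraph ℕ} {n a b c : ℕ}

theorem refl (h : a ≤ n) : ReachableAtMost G n a a :=
  ⟨Walk.nil, by simpa using h⟩

theorem symm : ReachableAtMost G n a b → ReachableAtMost G n b a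
  | ⟨w, hw⟩ => ⟨w.reverse, by simpa using hw⟩

theorem trans : ReachableAtMost G n a b → ReachableAtMost G n b c → ReachableAtMost G n a c
  | ⟨w₁, hw₁⟩, ⟨w₂, hw₂⟩ => ⟨w₁.append w₂, fun v hv => by
      rcases (w₁.mem_support_append_iff w₂).mp hv with hv | hv
      exacts [hw₁ v hv, hw₂ v hv]⟩

theorem mono {n' : ℕ} (hn : n ≤ n') : ReachableAtMost G n a b → ReachableAtMost G n' a b
  | ⟨w, hw⟩ => ⟨w, fun v hv => (hw v hv).trans hn⟩

theorem of_adj (h : G.Adj a b) (ha : a ≤ n) (hb : b ≤ n) : ReachableAtMost G n a b :=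
  ⟨h.toWalk, by simp [ha, hb]⟩

end ReachableAtMost

theorem fillIn_of_adj_of_reachableAtMost {G : SimpleGraph ℕ} {m a b j : ℕ} (hma : G.Adj m a)
    (hab : ReachableAtMost G m a b) (hbj : G.Adj b j) : FillIn G m j := by
  obtain ⟨w, hw⟩ := hab
  refine Or.inr ⟨Walk.cons hma (w.concat hbj), fun v hv => ?_⟩
  simp only [Walk.support_cons, Walk.support_concat, List.mem_cons, List.mem_append,
    List.not_mem_nil, or_false] at hv
  rcases hv with rfl | hv | rfl
  · exact Or.inl rfl
  · exact (hw v hv).eq_or_lt.imp_right Or.inr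
  · exact Or.inr (Or.inl rfl)

theorem rfun_pos {d j : ℕ} (hd : 0 < d) (hj : 1 ≤ j) : 0 < rfun d j := by
  unfold rfun
  split_ifs
  · exact one_pos
  · exact Nat.div_pos (by omega) hd

theorem rfun_lt {d j : ℕ} (hj : 2 ≤ j) : rfun d j < j := by
  rw [rfun, if_neg (by omega)]
  rcases Nat.eq_zero_or_pos d with rfl | hd
  · rw [Nat.div_zero]; omega
  · have h₁ : d - 1 ≤ j * d - j := Nat.mul_sub_one j d ▸ Nat.le_mul_of_pos_left _ (by omega)
    have h₂ : j ≤ j * d := Nat.le_mul_of_pos_right j hd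
    rw [Nat.div_lt_iff_lt_mul hd]
    omega

theorem card_le_nLrow {G : SimpleGraph ℕ} {M m : ℕ} {s : Finset ℕ}
    (hs : ∀ j ∈ s, m ≤ j ∧ j ≤ M ∧ FillIn G m j) : #s ≤ nLrow G M m := by
  rw [← Set.ncard_coe_finset, ← Nat.card_coe_set_eq, nLrow]
  exact Nat.card_mono ((Set.finite_Iic M).subset fun j hj => hj.2.1) (fun j hj => hs j hj)

section Design

variable {I d : ℕ} {G : SimpleGraph ℕ}
  (hedge : ∀ j ∈ Icc 1 I, G.Adj j (I + j) ∧ G.Adj (rfun d j) (I + j))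
include hedge

theorem reachableAtMost_one (hd : 0 < d) {a : ℕ} (ha : 1 ≤ a) (haI : a ≤ I) :
    ReachableAtMost G (I + a) a 1 := by
  induction a using Nat.strong_induction_on with
  | _ a ih =>
    rcases ha.eq_or_lt with rfl | ha
    · exact .refl (by omega)
    have hr : rfun d a < a := rfun_lt ha
    have ⟨hup, hdown⟩ := hedge a (mem_Icc.mpr ⟨by omega, haI⟩)
    exact (ReachableAtMost.of_adj hup (by omega) le_rfl).trans <|
      (ReachableAtMost.of_adj hdown.symm le_rfl (by omega)).trans <|
        (ih _ hr (rfun_pos hd (by omega)) (by omega)).mono (by omega)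

theorem fillIn_add_of_rfun_le (hd : 0 < d) {j m : ℕ} (hj : j ∈ Icc 1 I) (hrm : rfun d j ≤ m)
    (hmj : m ≤ j) : FillIn G (I + m) (I + j) := by
  rw [mem_Icc] at hj
  rcases hmj.eq_or_lt with rfl | hmj
  · exact Or.inl rfl
  have hr : 0 < rfun d j := rfun_pos hd hj.1
  exact fillIn_of_adj_of_reachableAtMost (hedge m (mem_Icc.mpr ⟨by omega, by omega⟩)).1.symm
    ((reachableAtMost_one hedge hd (by omega) (by omega)).trans
      ((reachableAtMost_one hedge hd hr (by omega)).symm.mono (by omega)))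
    (hedge j (mem_Icc.mpr hj)).2

theorem card_filter_rfun_le_nLrow (hd : 0 < d) (m : ℕ) :
    #{j ∈ Icc 2 I | rfun d j ≤ m ∧ m ≤ j} ≤ nLrow G (2 * I + 1) (I + m) := by
  rw [← card_map (addLeftEmbedding I)]
  refine card_le_nLrow fun x hx => ?_
  simp only [mem_map, mem_filter, mem_Icc, addLeftEmbedding_apply] at hx
  obtain ⟨j, ⟨⟨hj2, hjI⟩, hrm, hmj⟩, rfl⟩ := hx
  exact ⟨by omega, by omega,
    fillIn_add_of_rfun_le hedge hd (mem_Icc.mpr ⟨by omega, hjI⟩) hrm hmj⟩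

end Design

theorem sum_sub_rfun_eq_sum_card {d I : ℕ} (hd : 0 < d) :
    ∑ j ∈ Icc 2 I, (j - rfun d j + 1)
      = ∑ m ∈ Icc 1 I, #{j ∈ Icc 2 I | rfun d j ≤ m ∧ m ≤ j} := by
  refine (sum_congr rfl fun j hj => ?_).trans <|
    (sum_card_bipartiteAbove_eq_sum_card_bipartiteBelow
      (r := fun m j => rfun d j ≤ m ∧ m ≤ j)).symm
  rw [mem_Icc] at hj
  have : rfun d j < j := rfun_lt hj.1
  have : 0 < rfun d j := rfun_pos hd (by omega)
  have : (Icc 1 I).bipartiteBelow (fun m j => rfun d j ≤ m ∧ m ≤ j) j = Icc (rfun d j) j := by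
    ext m
    simp only [bipartiteBelow, mem_filter, mem_Icc]
    omega
  rw [this, Nat.card_Icc]
  omega

theorem stmt_17_general (I d : ℕ) (hd : 2 ≤ d) (G : SimpleGraph ℕ)
    (hedge : ∀ j ∈ Finset.Icc 1 I, G.Adj j (I + j) ∧ G.Adj (rfun d j) (I + j)) :
    (∀ j ∈ Finset.Icc 1 I, ∀ m, rfun d j ≤ m → m ≤ j → FillIn G (I + m) (I + j))
    ∧ ∑ j ∈ Finset.Icc 2 I, (j - rfun d j + 1)
        ≤ ∑ m ∈ Finset.Icc 1 (2 * I + 1), nLrow G (2 * I + 1) m := by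
  have hd₀ : 0 < d := by omega
  refine ⟨fun j hj m => fillIn_add_of_rfun_le hedge hd₀ hj, ?_⟩
  calc ∑ j ∈ Icc 2 I, (j - rfun d j + 1)
      = ∑ m ∈ Icc 1 I, #{j ∈ Icc 2 I | rfun d j ≤ m ∧ m ≤ j} := sum_sub_rfun_eq_sum_card hd₀
    _ ≤ ∑ m ∈ Icc 1 I, nLrow G (2 * I + 1) (I + m) :=
      sum_le_sum fun m _ => card_filter_rfun_le_nLrow hedge hd₀ m
    _ = ∑ x ∈ Icc (I + 1) (I + I), nLrow G (2 * I + 1) x := by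
      rw [← map_add_left_Icc, sum_map]; rfl
    _ ≤ ∑ x ∈ Icc 1 (2 * I + 1), nLrow G (2 * I + 1) x :=
      sum_le_sum_of_subset (Icc_subset_Icc (by omega) (by omega))

/-- Key step in the proof of Proposition 7 (worst-case balanced design): if the graph `G`
on the vertices `{1,…,2I+1}` contains the edges `{j, I+j}` and `{r(j), I+j}` for every
`j ∈ {1,…,I}`, then for every such `j` and every `m` with `r(j) ≤ m ≤ j` the vertex `I+j`
is a fill-in neighbor of `I+m`; consequently `n_L ≥ Σ_{j=2}^{I} (j - r(j) + 1)`. -/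
theorem stmt_17 (I d : ℕ) (hI : 1 ≤ I) (hd : 2 ≤ d) (G : SimpleGraph ℕ)
    (hedge : ∀ j ∈ Finset.Icc 1 I, G.Adj j (I + j) ∧ G.Adj (rfun d j) (I + j)) :
    (∀ j ∈ Finset.Icc 1 I, ∀ m, rfun d j ≤ m → m ≤ j → FillIn G (I + m) (I + j))
    ∧ ∑ j ∈ Finset.Icc 2 I, (j - rfun d j + 1)
        ≤ ∑ m ∈ Finset.Icc 1 (2 * I + 1), nLrow G (2 * I + 1) m :=
  stmt_17_general I d hd G hedge
end
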